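/- Let q ≥ 3 be a prime power. For every integer m ≥ 1, ∑_{P monic irreducible in F_q[t], deg P ≤ m} log(q^(deg P))/q^(deg P) > (m − 2.61)·log(q). -/
import Mathlib

open Polynomial

lemma splitCard (F : Type) [Field F] [Fintype F] (q : ℕ) (hq : Fintype.card F = q)
    (n : ℕ) (hn : n ≠ 0) (hq3 : 3 ≤ q) :
    ∃ hfin : Fintype ((X ^ q ^ n - X : F[X]).SplittingField),
      @Fintype.card _ hfin = q ^ n := by
  classical
  obtain ⟨p, hp_char⟩ := CharP.exists F
  haveI := hp_char
  have hp : p.Prime := CharP.char_is_prime F p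
  haveI : Fact p.Prime := ⟨hp⟩
  obtain ⟨k, -, hqk⟩ := FiniteField.card F p
  rw [hq] at hqk
  set K := (X ^ q ^ n - X : F[X]).SplittingField with hK
  haveI : CharP K p := (Algebra.charP_iff F K p).mp hp_char
  haveI : Finite K := Module.finite_of_finite F
  haveI hfin : Fintype K := Fintype.ofFinite K
  have hone_lt_q : 1 < q := by omega
  have hNdeg : (X ^ q ^ n - X : F[X]).natDegree = q ^ n :=
    FiniteField.X_pow_card_pow_sub_X_natDegree_eq F hn hone_lt_q
  have hNne : (X ^ q ^ n - X : F[X]) ≠ 0 :=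
    FiniteField.X_pow_card_pow_sub_X_ne_zero F hn hone_lt_q
  have hpq : p ∣ q ^ n := dvd_pow (hqk ▸ dvd_pow_self p k.pos.ne') hn
  have hsep : (X ^ q ^ n - X : F[X]).Separable := galois_poly_separable p _ hpq
  have hqn : q ^ n = p ^ (↑k * n) := by rw [hqk, ← pow_mul]
  -- the fixed points of x ↦ x^(q^n) form a subalgebra
  let S : Subalgebra F K :=
  { carrier := {x : K | x ^ q ^ n = x}
    mul_mem' := fun {a b} ha hb => by
      simp only [Set.mem_setOf_eq] at *
      rw [mul_pow, ha, hb]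
    one_mem' := by simp
    add_mem' := fun {a b} ha hb => by
      simp only [Set.mem_setOf_eq] at *
      have h := add_pow_char_pow (R := K) (p := p) (n := ↑k * n) (x := a) (y := b)
      rw [← hqn] at h
      rw [h, ha, hb]
    zero_mem' := by
      simp only [Set.mem_setOf_eq]
      exact zero_pow (pow_ne_zero _ (by omega))
    algebraMap_mem' := fun a => by
      simp only [Set.mem_setOf_eq]
      have h : a ^ q ^ n = a := by rw [← hq]; exact FiniteField.pow_card_pow n a
      rw [← map_pow, h] }
  have huniv : ∀ x : K, x ^ q ^ n = x := by
    intro x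
    have htop : (⊤ : Subalgebra F K) ≤ S := by
      rw [← Polynomial.IsSplittingField.adjoin_rootSet K (X ^ q ^ n - X : F[X])]
      apply Algebra.adjoin_le
      intro y hy
      have h2 := (mem_rootSet.mp hy).2
      have : y ^ q ^ n - y = 0 := by
        simpa [sub_eq_zero] using h2
      simpa [S, Set.mem_setOf_eq, sub_eq_zero] using this
    exact htop (Algebra.mem_top)
  have hroot_univ : (X ^ q ^ n - X : F[X]).rootSet K = Set.univ := by
    apply Set.eq_univ_of_forall
    intro x
    rw [mem_rootSet]
    refine ⟨hNne, ?_⟩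
    simp [huniv x, sub_eq_zero]
  have hcard1 : Fintype.card ((X ^ q ^ n - X : F[X]).rootSet K) = q ^ n := by
    rw [card_rootSet_eq_natDegree hsep (SplittingField.splits _), hNdeg]
  refine ⟨hfin, ?_⟩
  rw [← hcard1]
  exact (Fintype.card_congr ((Equiv.setCongr hroot_univ).trans (Equiv.Set.univ K))).symm

open IntermediateField in
lemma key_count_aux (F : Type) [Field F] [Fintype F] (q : ℕ) (hq : Fintype.card F = q)
    (hq3 : 3 ≤ q) (n : ℕ) (hn : 1 ≤ n)
    (K : Type) [Field K] [Algebra F K] [Fintype K] (hKcard : Fintype.card K = q ^ n)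
    (T : Finset F[X])
    (hT : ∀ P : F[X], P.Monic → Irreducible P → P.natDegree = n → P ∈ T) :
    (q : ℝ) ^ n - 1.5 * Real.sqrt q ^ n ≤ (n : ℝ) * T.card := by
  classical
  have hone_lt_q : 1 < q := by omega
  have hrank : Module.finrank F K = n := by
    have h := Module.card_eq_pow_finrank (K := F) (V := K)
    rw [hKcard, hq] at h
    exact (Nat.pow_right_injective (by omega) h).symm
  have hint : ∀ x : K, IsIntegral F x := fun x => IsIntegral.of_finite F x
  have hdvd : ∀ x : K, (minpoly F x).natDegree ∣ n := fun x =>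
    hrank ▸ minpoly.degree_dvd (hint x)
  have hpow : ∀ x : K, x ^ q ^ (minpoly F x).natDegree = x := by
    intro x
    haveI : Fintype F⟮x⟯ := Fintype.ofFinite _
    have hcardE : Fintype.card F⟮x⟯ = q ^ (minpoly F x).natDegree := by
      rw [Module.card_eq_pow_finrank (K := F) (V := F⟮x⟯), IntermediateField.adjoin.finrank (hint x), hq]
    have hgen := FiniteField.pow_card (AdjoinSimple.gen F x)
    rw [hcardE] at hgen
    have := congrArg (fun z : F⟮x⟯ => (z : K)) hgen
    simpa using this
  set A : Finset K := Finset.univ.filter (fun x => (minpoly F x).natDegree = n) with hA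
  set B : ℕ → Finset K := fun d => Finset.univ.filter (fun x => x ^ q ^ d = x) with hB
  have hBcard : ∀ d ∈ n.properDivisors, (B d).card ≤ q ^ d := by
    intro d hd
    have hd1 : d ≠ 0 := by
      rintro rfl
      have h0 := (Nat.mem_properDivisors.mp hd).1
      have := Nat.eq_zero_of_zero_dvd h0
      omega
    have hsub : B d ⊆ (X ^ q ^ d - X : K[X]).roots.toFinset := by
      intro x hx
      rw [Multiset.mem_toFinset,
        mem_roots (FiniteField.X_pow_card_pow_sub_X_ne_zero K hd1 hone_lt_q)]
      have hx' := (Finset.mem_filter.mp hx).2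
      simp [IsRoot, hx', sub_eq_zero]
    calc (B d).card ≤ _ := Finset.card_le_card hsub
      _ ≤ Multiset.card (X ^ q ^ d - X : K[X]).roots := Multiset.toFinset_card_le _
      _ ≤ (X ^ q ^ d - X : K[X]).natDegree := card_roots' _
      _ = q ^ d := FiniteField.X_pow_card_pow_sub_X_natDegree_eq K hd1 hone_lt_q
  have hAB : (Finset.univ : Finset K) ⊆ A ∪ n.properDivisors.biUnion B := by
    intro x _
    by_cases hx : (minpoly F x).natDegree = n
    · exact Finset.mem_union_left _ (Finset.mem_filter.mpr ⟨Finset.mem_univ _, hx⟩)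
    · refine Finset.mem_union_right _ (Finset.mem_biUnion.mpr ⟨(minpoly F x).natDegree, ?_, ?_⟩)
      · exact Nat.mem_properDivisors.mpr ⟨hdvd x, (Nat.le_of_dvd (by omega) (hdvd x)).lt_of_ne hx⟩
      · exact Finset.mem_filter.mpr ⟨Finset.mem_univ _, hpow x⟩
  have hcount : q ^ n ≤ A.card + ∑ d ∈ n.properDivisors, q ^ d := by
    calc q ^ n = Fintype.card K := hKcard.symm
      _ = (Finset.univ : Finset K).card := Finset.card_univ.symm
      _ ≤ (A ∪ n.properDivisors.biUnion B).card := Finset.card_le_card hAB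
      _ ≤ A.card + (n.properDivisors.biUnion B).card := Finset.card_union_le _ _
      _ ≤ A.card + ∑ d ∈ n.properDivisors, (B d).card :=
          Nat.add_le_add_left Finset.card_biUnion_le _
      _ ≤ A.card + ∑ d ∈ n.properDivisors, q ^ d :=
          Nat.add_le_add_left (Finset.sum_le_sum hBcard) _
  have hAT : A.card ≤ n * T.card := by
    have h1 : A.card ≤ n * (A.image (minpoly F)).card := by
      apply Finset.card_le_mul_card_image
      intro P hP
      obtain ⟨x₀, hx₀, rfl⟩ := Finset.mem_image.mp hP
      have hPdeg : (minpoly F x₀).natDegree = n := (Finset.mem_filter.mp hx₀).2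
      have hfib : A.filter (fun x => minpoly F x = minpoly F x₀) ⊆
          ((minpoly F x₀).aroots K).toFinset := by
        intro x hx
        have hxe : minpoly F x = minpoly F x₀ := (Finset.mem_filter.mp hx).2
        rw [Multiset.mem_toFinset, mem_aroots]
        exact ⟨minpoly.ne_zero (hint x₀), by rw [← hxe]; exact minpoly.aeval F x⟩
      calc (A.filter (fun x => minpoly F x = minpoly F x₀)).card
          ≤ _ := Finset.card_le_card hfib
        _ ≤ Multiset.card ((minpoly F x₀).aroots K) := Multiset.toFinset_card_le _
        _ ≤ ((minpoly F x₀).map (algebraMap F K)).natDegree := card_roots' _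
        _ = (minpoly F x₀).natDegree := natDegree_map _
        _ = n := hPdeg
    have h2 : A.image (minpoly F) ⊆ T := by
      intro P hP
      obtain ⟨x, hx, rfl⟩ := Finset.mem_image.mp hP
      exact hT _ (minpoly.monic (hint x)) (minpoly.irreducible (hint x))
        ((Finset.mem_filter.mp hx).2)
    exact h1.trans (Nat.mul_le_mul_left n (Finset.card_le_card h2))
  -- now pass to the reals
  have hq0 : (0:ℝ) ≤ (q:ℝ) := by positivity
  have hsq : Real.sqrt q ^ 2 = q := Real.sq_sqrt hq0
  have hsq1 : (1:ℝ) ≤ Real.sqrt q := by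
    rw [show (1:ℝ) = Real.sqrt 1 by simp]
    exact Real.sqrt_le_sqrt (by exact_mod_cast by omega)
  have hgeom : ∀ j : ℕ, ∑ d ∈ Finset.Icc 1 j, (q:ℝ) ^ d ≤ 1.5 * (q:ℝ) ^ j := by
    intro j
    induction j with
    | zero => simp; norm_num
    | succ j ih =>
      rw [Finset.sum_Icc_succ_top (by omega), pow_succ]
      have hq3' : (3:ℝ) ≤ (q:ℝ) := by exact_mod_cast hq3
      have hpow_pos : (0:ℝ) < (q:ℝ) ^ j := by positivity
      nlinarith [ih, mul_le_mul_of_nonneg_left hq3' (le_of_lt hpow_pos)]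
  have hPD : ∑ d ∈ n.properDivisors, (q:ℝ) ^ d ≤ 1.5 * Real.sqrt q ^ n := by
    have hsub : n.properDivisors ⊆ Finset.Icc 1 (n / 2) := by
      intro d hd
      obtain ⟨hdvd', hlt⟩ := Nat.mem_properDivisors.mp hd
      obtain ⟨c, rfl⟩ := hdvd'
      have hd0 : d ≠ 0 := by rintro rfl; omega
      have hc : 2 ≤ c := by
        rcases Nat.lt_or_ge c 2 with h | h
        · interval_cases c <;> omega
        · exact h
      refine Finset.mem_Icc.mpr ⟨by omega, ?_⟩
      rw [Nat.le_div_iff_mul_le (by norm_num)]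
      nlinarith
    have h1 : ∑ d ∈ n.properDivisors, (q:ℝ) ^ d ≤ ∑ d ∈ Finset.Icc 1 (n / 2), (q:ℝ) ^ d :=
      Finset.sum_le_sum_of_subset_of_nonneg hsub (fun i _ _ => by positivity)
    have h2 : (q:ℝ) ^ (n / 2) ≤ Real.sqrt q ^ n := by
      calc (q:ℝ) ^ (n / 2) = (Real.sqrt q ^ 2) ^ (n / 2) := by rw [hsq]
        _ = Real.sqrt q ^ (2 * (n / 2)) := by rw [← pow_mul]
        _ ≤ Real.sqrt q ^ n := pow_le_pow_right₀ hsq1 (by omega)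
    calc ∑ d ∈ n.properDivisors, (q:ℝ) ^ d ≤ _ := h1
      _ ≤ 1.5 * (q:ℝ) ^ (n / 2) := hgeom _
      _ ≤ 1.5 * Real.sqrt q ^ n := by nlinarith
  have hcountR : (q:ℝ) ^ n ≤ (A.card : ℝ) + ∑ d ∈ n.properDivisors, (q:ℝ) ^ d := by
    have := hcount
    push_cast
    exact_mod_cast this
  have hATR : (A.card : ℝ) ≤ (n : ℝ) * T.card := by exact_mod_cast hAT
  linarith

lemma key_count (F : Type) [Field F] [Fintype F] (q : ℕ) (hq : Fintype.card F = q)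
    (hq3 : 3 ≤ q) (n : ℕ) (hn : 1 ≤ n) (T : Finset F[X])
    (hT : ∀ P : F[X], P.Monic → Irreducible P → P.natDegree = n → P ∈ T) :
    (q : ℝ) ^ n - 1.5 * Real.sqrt q ^ n ≤ (n : ℝ) * T.card := by
  obtain ⟨hfin, hKcard⟩ := splitCard F q hq n (by omega) hq3
  exact key_count_aux F q hq hq3 n hn (X ^ q ^ n - X : F[X]).SplittingField hKcard T hT

lemma geom_aux {r : ℝ} (h0 : 0 ≤ r) (h1 : r < 1) (m : ℕ) :
    ∑ n ∈ Finset.Icc 1 m, r ^ n ≤ r / (1 - r) := by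
  have h1r : (0:ℝ) < 1 - r := by linarith
  have hEq : ∀ j : ℕ, ∑ n ∈ Finset.Icc 1 j, r ^ n = (r - r ^ (j+1)) / (1 - r) := by
    intro j
    induction j with
    | zero => simp
    | succ j ih =>
      rw [Finset.sum_Icc_succ_top (by omega), ih]
      field_simp
      ring
  rw [hEq m]
  gcongr
  nlinarith [pow_nonneg h0 (m+1)]

/-- For a finite field with `q ≥ 3` elements and any `m ≥ 1`,
`∑_{P monic irreducible, deg P ≤ m} log(q^(deg P))/q^(deg P) > (m − 2.61)·log q`. -/
theorem stmt_9 (F : Type) [Field F] [Fintype F] (q : ℕ) (hq : Fintype.card F = q)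
    (hq3 : 3 ≤ q) (m : ℕ) (hm : 1 ≤ m) :
    ∑' P : {P : F[X] // P.Monic ∧ Irreducible P ∧ P.natDegree ≤ m},
        Real.log ((q : ℝ) ^ P.1.natDegree) / (q : ℝ) ^ P.1.natDegree
      > ((m : ℝ) - 2.61) * Real.log q := by
  classical
  haveI hfin : Finite {P : F[X] // P.Monic ∧ Irreducible P ∧ P.natDegree ≤ m} := by
    apply Finite.of_injective (fun P : {P : F[X] // P.Monic ∧ Irreducible P ∧ P.natDegree ≤ m} =>
      (fun i : Fin (m+1) => P.1.coeff i))
    intro P Q h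
    apply Subtype.ext
    apply Polynomial.ext
    intro i
    rcases lt_or_ge i (m+1) with hi | hi
    · exact congrFun h ⟨i, hi⟩
    · rw [P.1.coeff_eq_zero_of_natDegree_lt (lt_of_le_of_lt P.2.2.2 (by omega)),
        Q.1.coeff_eq_zero_of_natDegree_lt (lt_of_le_of_lt Q.2.2.2 (by omega))]
  haveI := Fintype.ofFinite {P : F[X] // P.Monic ∧ Irreducible P ∧ P.natDegree ≤ m}
  rw [tsum_fintype]
  have hmaps : ∀ P : {P : F[X] // P.Monic ∧ Irreducible P ∧ P.natDegree ≤ m},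
      P ∈ Finset.univ → P.1.natDegree ∈ Finset.Icc 1 m :=
    fun P _ => Finset.mem_Icc.mpr ⟨P.2.2.1.natDegree_pos, P.2.2.2⟩
  rw [← Finset.sum_fiberwise_of_maps_to hmaps]
  -- basic numeric facts
  have hq0 : (0:ℝ) < (q:ℝ) := by positivity
  have hq1R : (1:ℝ) < (q:ℝ) := by exact_mod_cast (by omega : 1 < q)
  have hlog : 0 < Real.log q := Real.log_pos hq1R
  have hsqN : Real.sqrt q * Real.sqrt q = q := Real.mul_self_sqrt hq0.le
  have hsq173 : (1.73:ℝ) ≤ Real.sqrt q := by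
    rw [show (1.73:ℝ) = Real.sqrt (1.73^2) by rw [Real.sqrt_sq (by norm_num)]]
    apply Real.sqrt_le_sqrt
    have : (3:ℝ) ≤ (q:ℝ) := by exact_mod_cast hq3
    nlinarith
  have hsqpos : (0:ℝ) < Real.sqrt q := by linarith
  set r : ℝ := (Real.sqrt q)⁻¹ with hr
  have hr0 : 0 ≤ r := by positivity
  have hr1 : r < 1 := by
    rw [hr, inv_lt_one_iff₀]
    right; linarith
  have hr173 : r ≤ 1 / 1.73 := by
    rw [hr]
    rw [inv_le_comm₀ hsqpos (by norm_num)]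
    linarith
  -- per-degree bound
  have hterm : ∀ n ∈ Finset.Icc 1 m,
      (1 - 1.5 * r ^ n) * Real.log q ≤
      ∑ P ∈ Finset.univ.filter
          (fun P : {P : F[X] // P.Monic ∧ Irreducible P ∧ P.natDegree ≤ m} =>
            P.1.natDegree = n),
        Real.log ((q : ℝ) ^ P.1.natDegree) / (q : ℝ) ^ P.1.natDegree := by
    intro n hn
    obtain ⟨hn1, hnm⟩ := Finset.mem_Icc.mp hn
    set s := Finset.univ.filter
        (fun P : {P : F[X] // P.Monic ∧ Irreducible P ∧ P.natDegree ≤ m} =>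
          P.1.natDegree = n) with hs
    have hsum : ∑ P ∈ s, Real.log ((q : ℝ) ^ P.1.natDegree) / (q : ℝ) ^ P.1.natDegree
        = (s.card : ℝ) * (((n:ℝ) * Real.log q) / (q:ℝ) ^ n) := by
      rw [Finset.sum_congr rfl (fun P hP => by
        rw [(Finset.mem_filter.mp hP).2, Real.log_pow]), Finset.sum_const, nsmul_eq_mul]
    have hkey : (q : ℝ) ^ n - 1.5 * Real.sqrt q ^ n ≤ (n : ℝ) * s.card := by
      have hcardT : (s.image Subtype.val).card = s.card :=
        Finset.card_image_of_injective _ Subtype.val_injective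
      have := key_count F q hq hq3 n hn1 (s.image Subtype.val) (fun P hmo hirr hdeg =>
        Finset.mem_image.mpr ⟨⟨P, hmo, hirr, hdeg ▸ hnm⟩,
          Finset.mem_filter.mpr ⟨Finset.mem_univ _, hdeg⟩, rfl⟩)
      rwa [hcardT] at this
    have hqn_pos : (0:ℝ) < (q:ℝ) ^ n := by positivity
    have hqq : (q:ℝ) ^ n = Real.sqrt q ^ n * Real.sqrt q ^ n := by
      rw [← mul_pow, hsqN]
    have hrn : r ^ n = Real.sqrt q ^ n / (q:ℝ) ^ n := by
      rw [hr, inv_pow, eq_div_iff hqn_pos.ne', hqq, inv_mul_cancel_left₀ (by positivity)]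
    have h1 : (1 - 1.5 * r ^ n) * Real.log q
        = ((q:ℝ) ^ n - 1.5 * Real.sqrt q ^ n) * (Real.log q / (q:ℝ) ^ n) := by
      rw [hrn]
      field_simp
    rw [hsum, h1]
    calc ((q:ℝ) ^ n - 1.5 * Real.sqrt q ^ n) * (Real.log q / (q:ℝ) ^ n)
        ≤ ((n:ℝ) * s.card) * (Real.log q / (q:ℝ) ^ n) :=
          mul_le_mul_of_nonneg_right hkey (div_nonneg hlog.le hqn_pos.le)
      _ = (s.card : ℝ) * (((n:ℝ) * Real.log q) / (q:ℝ) ^ n) := by ring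
  have hlow : ((m:ℝ) - 1.5 * ∑ n ∈ Finset.Icc 1 m, r ^ n) * Real.log q
      ≤ ∑ n ∈ Finset.Icc 1 m, ∑ P ∈ Finset.univ.filter
          (fun P : {P : F[X] // P.Monic ∧ Irreducible P ∧ P.natDegree ≤ m} =>
            P.1.natDegree = n),
        Real.log ((q : ℝ) ^ P.1.natDegree) / (q : ℝ) ^ P.1.natDegree := by
    have := Finset.sum_le_sum hterm
    refine le_trans (le_of_eq ?_) this
    rw [← Finset.sum_mul, Finset.sum_sub_distrib, Finset.sum_const, Nat.card_Icc,
      ← Finset.mul_sum]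
    simp
  have hgeo : 1.5 * ∑ n ∈ Finset.Icc 1 m, r ^ n ≤ 2.1 := by
    have h1 := geom_aux hr0 hr1 m
    have h2 : r / (1 - r) ≤ 1.4 := by
      rw [div_le_iff₀ (by linarith)]
      linarith
    linarith
  have hfinal : ((m:ℝ) - 2.61) * Real.log q
      < ((m:ℝ) - 1.5 * ∑ n ∈ Finset.Icc 1 m, r ^ n) * Real.log q := by
    apply mul_lt_mul_of_pos_right _ hlog
    linarith
  linarith
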